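/- Let G be a finite simple bipartite graph, let S be a local maximum stable set of G, and let M be a maximum matching of the subgraph of G induced by N[S]. Then there exists a maximum matching M₀ of G with M ⊆ M₀. -/

import Mathlib

open Finset
open scoped Classical

/-- `S` is a stable (independent) set of `G`. -/
def IsStableSet {V : Type*} (G : SimpleGraph V) (S : Finset V) : Prop :=
  ∀ u ∈ S, ∀ v ∈ S, ¬ G.Adj u v

/-- `S` is a maximum stable set of `G`. -/
def IsMaxStableSet {V : Type*} [Fintype V] (G : SimpleGraph V) (S : Finset V) : Prop :=
  IsStableSet G S ∧ ∀ T : Finset V, IsStableSet G T → T.card ≤ S.card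

/-- The closed neighborhood `N[S]` of a set `S` of vertices of `G`. -/
noncomputable def closedNbhd {V : Type*} [Fintype V] (G : SimpleGraph V) (S : Finset V) :
    Finset V :=
  S ∪ Finset.univ.filter (fun v => ∃ u ∈ S, G.Adj u v)

/-- `S` is a local maximum stable set of `G`: it is a maximum stable set of the subgraph
of `G` induced by `N[S]`, i.e. it is stable and no stable set contained in `N[S]` is larger. -/
def IsLocalMaxStableSet {V : Type*} [Fintype V] (G : SimpleGraph V) (S : Finset V) : Prop :=
  IsStableSet G S ∧
    ∀ T : Finset V, IsStableSet G T → T ⊆ closedNbhd G S → T.card ≤ S.card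

/-- `M` is a matching of `G`: a set of pairwise disjoint edges of `G`. -/
def IsMatching {V : Type*} (G : SimpleGraph V) (M : Finset (Sym2 V)) : Prop :=
  (∀ e ∈ M, e ∈ G.edgeSet) ∧
    ∀ e ∈ M, ∀ f ∈ M, e ≠ f → ∀ v : V, v ∈ e → v ∉ f

/-- `M` is a maximum matching of `G`. -/
def IsMaxMatching {V : Type*} [Fintype V] (G : SimpleGraph V) (M : Finset (Sym2 V)) : Prop :=
  IsMatching G M ∧ ∀ N : Finset (Sym2 V), IsMatching G N → N.card ≤ M.card

/-- `M` is a matching of the subgraph of `G` induced by the vertex set `A`, i.e. a matching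
of `G` all of whose edges have both endpoints in `A`. -/
def IsMatchingOn {V : Type*} (G : SimpleGraph V) (A : Finset V) (M : Finset (Sym2 V)) : Prop :=
  IsMatching G M ∧ ∀ e ∈ M, ∀ v : V, v ∈ e → v ∈ A

/-- `M` is a maximum matching of the subgraph of `G` induced by `A`. -/
def IsMaxMatchingOn {V : Type*} [Fintype V] (G : SimpleGraph V) (A : Finset V)
    (M : Finset (Sym2 V)) : Prop :=
  IsMatchingOn G A M ∧ ∀ N : Finset (Sym2 V), IsMatchingOn G A N → N.card ≤ M.card

/-- The stability number `α` of the subgraph of `G` induced by `A`. -/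
noncomputable def stabNumOn {V : Type*} [Fintype V] (G : SimpleGraph V) (A : Finset V) : ℕ :=
  sSup {n | ∃ S : Finset V, S ⊆ A ∧ IsStableSet G S ∧ S.card = n}

/-- The matching number `μ` of the subgraph of `G` induced by `A`. -/
noncomputable def matchNumOn {V : Type*} [Fintype V] (G : SimpleGraph V) (A : Finset V) : ℕ :=
  sSup {n | ∃ M : Finset (Sym2 V), IsMatchingOn G A M ∧ M.card = n}

/-- The stability number `α(G)`. -/
noncomputable def stabNum {V : Type*} [Fintype V] (G : SimpleGraph V) : ℕ :=
  stabNumOn G Finset.univ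

/-- The matching number `μ(G)`. -/
noncomputable def matchNum {V : Type*} [Fintype V] (G : SimpleGraph V) : ℕ :=
  matchNumOn G Finset.univ

/-- `G` is a König–Egerváry graph: `α(G) + μ(G) = |V(G)|`. -/
def IsKonigEgervary {V : Type*} [Fintype V] (G : SimpleGraph V) : Prop :=
  stabNum G + matchNum G = Fintype.card V

/-- The subgraph of `G` induced by `A` is a König–Egerváry graph:
`α(G[A]) + μ(G[A]) = |A|`. -/
def IsKonigEgervaryOn {V : Type*} [Fintype V] (G : SimpleGraph V) (A : Finset V) : Prop :=
  stabNumOn G A + matchNumOn G A = A.card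

/-! Extend `S` to a maximum stable set `A` of `G`, which local maximality allows. In a bipartite
graph, Hall's theorem matches `W \ A` into `A` whenever `A` is a maximum stable set inside `W`.
Inside `N[S]` this gives `|M| ≥ |N(S)|`; in all of `G` it matches the vertices of `V \ A` outside
`N[S]` into `A` by edges avoiding `N[S]`. Adding those edges to `M` yields a matching of size at
least `|V \ A|`, and no matching is larger because `V \ A` is a vertex cover. -/

section

variable {V : Type*} {G : SimpleGraph V}

def IsMaxStableSetIn (G : SimpleGraph V) (W A : Finset V) : Prop :=
  A ⊆ W ∧ IsStableSet G A ∧ ∀ T : Finset V, IsStableSet G T → T ⊆ W → T.card ≤ A.card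

lemma IsStableSet.mono {S T : Finset V} (hS : IsStableSet G S) (hTS : T ⊆ S) :
    IsStableSet G T :=
  fun u hu v hv => hS u (hTS hu) v (hTS hv)

lemma IsLocalMaxStableSet.isMaxStableSetIn [Fintype V] {S : Finset V}
    (hS : IsLocalMaxStableSet G S) : IsMaxStableSetIn G (closedNbhd G S) S :=
  ⟨subset_union_left, hS⟩

lemma IsMaxStableSet.isMaxStableSetIn_univ [Fintype V] {A : Finset V}
    (hA : IsMaxStableSet G A) : IsMaxStableSetIn G univ A :=
  ⟨subset_univ A, hA.1, fun T hT _ => hA.2 T hT⟩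

lemma exists_isMaxStableSet [Fintype V] (G : SimpleGraph V) : ∃ A, IsMaxStableSet G A := by
  obtain ⟨A, hA, hAmax⟩ := exists_max_image {T ∈ univ.powerset | IsStableSet G T} card
    ⟨∅, by simp [IsStableSet]⟩
  exact ⟨A, (mem_filter.mp hA).2, fun T hT => hAmax T (by simpa using hT)⟩

lemma mem_closedNbhd [Fintype V] {S : Finset V} {v : V} :
    v ∈ closedNbhd G S ↔ v ∈ S ∨ ∃ u ∈ S, G.Adj u v := by
  simp [closedNbhd]

/-- Exchanging the part of a maximum stable set that lies in `N[S]` for `S` keeps it stable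
and, by local maximality, does not make it smaller. -/
lemma IsLocalMaxStableSet.exists_isMaxStableSet_superset [Fintype V] {S : Finset V}
    (hS : IsLocalMaxStableSet G S) : ∃ A, S ⊆ A ∧ IsMaxStableSet G A := by
  obtain ⟨A₀, hA₀, hA₀max⟩ := exists_isMaxStableSet G
  set W := closedNbhd G S
  have hSW : Disjoint (A₀ \ W) S :=
    disjoint_left.mpr fun v hv hvS => (mem_sdiff.mp hv).2 (mem_closedNbhd.mpr (Or.inl hvS))
  refine ⟨A₀ \ W ∪ S, subset_union_right, ?_, fun T hT => ?_⟩
  · intro u hu v hv hadj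
    simp only [mem_union, mem_sdiff] at hu hv
    rcases hu with ⟨huA, huW⟩ | huS <;> rcases hv with ⟨hvA, hvW⟩ | hvS
    · exact hA₀ u huA v hvA hadj
    · exact huW (mem_closedNbhd.mpr (Or.inr ⟨v, hvS, hadj.symm⟩))
    · exact hvW (mem_closedNbhd.mpr (Or.inr ⟨u, huS, hadj⟩))
    · exact hS.1 u huS v hvS hadj
  · have hinter : (A₀ ∩ W).card ≤ S.card := hS.2 _ (hA₀.mono inter_subset_left) inter_subset_right
    have hsplit := card_sdiff_add_card_inter A₀ W
    rw [card_union_of_disjoint hSW]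
    have := hA₀max T hT
    omega

section Matching

variable {M M' : Finset (Sym2 V)}

lemma IsMatching.card_le_card_of_forall_exists_mem {C : Finset V} (hM : IsMatching G M)
    (hC : ∀ e ∈ M, ∃ v ∈ C, v ∈ e) : M.card ≤ C.card :=
  card_le_card_of_forall_subsingleton (fun e v => v ∈ e) hC fun v _ e he f hf =>
    by_contra fun hef => hM.2 e he.1 f hf.1 hef v he.2 hf.2

lemma IsMatching.card_le_card_compl [Fintype V] {A : Finset V} (hM : IsMatching G M)
    (hA : IsStableSet G A) : M.card ≤ Aᶜ.card := by
  refine hM.card_le_card_of_forall_exists_mem fun e he => ?_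
  have hadj := hM.1 e he
  induction e using Sym2.ind with
  | h u v =>
    by_cases hu : u ∈ A
    · exact ⟨v, mem_compl.mpr fun hv => hA u hu v hv hadj, Sym2.mem_mk_right u v⟩
    · exact ⟨u, mem_compl.mpr hu, Sym2.mem_mk_left u v⟩

lemma IsMatching.union {W : Set V} (hM : IsMatching G M) (hM' : IsMatching G M')
    (hMW : ∀ e ∈ M, ∀ v ∈ e, v ∈ W) (hM'W : ∀ e ∈ M', ∀ v ∈ e, v ∉ W) :
    IsMatching G (M ∪ M') := by
  refine ⟨fun e he => (mem_union.mp he).elim (hM.1 e) (hM'.1 e), ?_⟩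
  intro e he f hf hef v hve hvf
  rcases mem_union.mp he with he | he <;> rcases mem_union.mp hf with hf | hf
  · exact hM.2 e he f hf hef v hve hvf
  · exact hM'W f hf v hvf (hMW e he v hve)
  · exact hM'W e he v hve (hMW f hf v hvf)
  · exact hM'.2 e he f hf hef v hve hvf

lemma disjoint_of_forall_mem_of_forall_notMem {W : Set V}
    (hMW : ∀ e ∈ M, ∀ v ∈ e, v ∈ W) (hM'W : ∀ e ∈ M', ∀ v ∈ e, v ∉ W) : Disjoint M M' :=
  disjoint_left.mpr fun e he he' => hM'W e he' _ e.out_fst_mem (hMW e he _ e.out_fst_mem)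

end Matching

section EdgesOfMap

variable {D : Finset V} {φ : V → V}

lemma forall_mem_of_mem_image_mk {P : V → Prop} (hP : ∀ c ∈ D, P c ∧ P (φ c)) :
    ∀ e ∈ D.image (fun c => s(c, φ c)), ∀ v ∈ e, P v := by
  simp only [mem_image, forall_exists_index, and_imp]
  rintro _ c hc rfl v hv
  rcases Sym2.mem_iff.mp hv with rfl | rfl
  exacts [(hP v hc).1, (hP c hc).2]

lemma card_image_mk_of_forall_apply_notMem (hD : ∀ c ∈ D, φ c ∉ D) :
    (D.image fun c => s(c, φ c)).card = D.card := by
  refine card_image_of_injOn fun c hc c' hc' h => ?_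
  rcases Sym2.eq_iff.mp h with ⟨h, -⟩ | ⟨-, h⟩
  · exact h
  · exact absurd (h ▸ hc' : φ c ∈ D) (hD c hc)

lemma isMatching_image_mk (hinj : Set.InjOn φ D) (hadj : ∀ c ∈ D, G.Adj c (φ c))
    (hD : ∀ c ∈ D, φ c ∉ D) : IsMatching G (D.image fun c => s(c, φ c)) := by
  refine ⟨?_, ?_⟩
  · simp only [mem_image, forall_exists_index, and_imp]
    rintro _ c hc rfl
    exact hadj c hc
  · simp only [mem_image, forall_exists_index, and_imp]
    rintro _ c hc rfl _ c' hc' rfl hne v hv hv'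
    have hcc' : c ≠ c' := fun h => hne (h ▸ rfl)
    rcases Sym2.mem_iff.mp hv with rfl | rfl <;> rcases Sym2.mem_iff.mp hv' with h | h
    · exact hcc' h
    · exact hD c' hc' (h ▸ hc)
    · exact hD c hc (h ▸ hc')
    · exact hcc' (hinj hc hc' h)

end EdgesOfMap

section Hall

variable {W A : Finset V}

/-- Otherwise trading the neighbours of `X` in `A` for `X` would give a larger stable set in `W`. -/
lemma IsMaxStableSetIn.card_le_card_biUnion_of_isStableSet (hA : IsMaxStableSetIn G W A)
    {X : Finset V} (hXW : X ⊆ W \ A) (hX : IsStableSet G X) :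
    X.card ≤ (X.biUnion fun x => A.filter (G.Adj x)).card := by
  set N := X.biUnion fun x => A.filter (G.Adj x)
  have hNA : N ⊆ A := biUnion_subset.mpr fun _ _ => filter_subset _ _
  have hXA : Disjoint (A \ N) X :=
    disjoint_left.mpr fun v hv hvX => (mem_sdiff.mp (hXW hvX)).2 (mem_sdiff.mp hv).1
  have hT : IsStableSet G (A \ N ∪ X) := by
    have hcross : ∀ a ∈ A \ N, ∀ x ∈ X, ¬ G.Adj x a := fun a ha x hx hxa =>
      (mem_sdiff.mp ha).2 (mem_biUnion.mpr ⟨x, hx, mem_filter.mpr ⟨(mem_sdiff.mp ha).1, hxa⟩⟩)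
    intro u hu v hv hadj
    rcases mem_union.mp hu with hu | hu <;> rcases mem_union.mp hv with hv | hv
    · exact hA.2.1 u (mem_sdiff.mp hu).1 v (mem_sdiff.mp hv).1 hadj
    · exact hcross u hu v hv hadj.symm
    · exact hcross v hv u hu hadj
    · exact hX u hu v hv hadj
  have hTW : A \ N ∪ X ⊆ W :=
    union_subset (sdiff_subset.trans hA.1) (hXW.trans sdiff_subset)
  have := hA.2.2 _ hT hTW
  rw [card_union_of_disjoint hXA, card_sdiff_of_subset hNA] at this
  have := card_le_card hNA
  omega

/-- Hall's condition: each side of the bipartition meets `X` in a stable set, and the two sides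
have disjoint neighbourhoods. -/
lemma IsMaxStableSetIn.card_le_card_biUnion_of_bipartition (hA : IsMaxStableSetIn G W A)
    {p : V → Prop} (hp : ∀ u v, G.Adj u v → (p u ↔ ¬ p v)) {X : Finset V} (hXW : X ⊆ W \ A) :
    X.card ≤ (X.biUnion fun x => A.filter (G.Adj x)).card := by
  have hstable : ∀ Y ⊆ X, (∀ u ∈ Y, ∀ v ∈ Y, (p u ↔ p v)) → IsStableSet G Y :=
    fun Y _ hY u hu v hv hadj => by
      have := hp u v hadj
      have := hY u hu v hv
      tauto
  set X₁ := X.filter p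
  have hX₁ : X₁ ⊆ X := filter_subset p X
  have hp₁ : ∀ v ∈ X₁, p v := fun v hv => (mem_filter.mp hv).2
  have hp₂ : ∀ v ∈ X \ X₁, ¬ p v := fun v hv h =>
    (mem_sdiff.mp hv).2 (mem_filter.mpr ⟨(mem_sdiff.mp hv).1, h⟩)
  have h₁ := hA.card_le_card_biUnion_of_isStableSet (hX₁.trans hXW)
    (hstable X₁ hX₁ fun u hu v hv => by simp [hp₁ u hu, hp₁ v hv])
  have h₂ := hA.card_le_card_biUnion_of_isStableSet ((sdiff_subset (t := X₁)).trans hXW)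
    (hstable _ sdiff_subset fun u hu v hv => by simp [hp₂ u hu, hp₂ v hv])
  have hdisj : Disjoint (X₁.biUnion fun x => A.filter (G.Adj x))
      ((X \ X₁).biUnion fun x => A.filter (G.Adj x)) := by
    simp only [disjoint_left, mem_biUnion, mem_filter, not_exists, not_and]
    rintro v ⟨x, hx, -, hxv⟩ y hy - hyv
    have := hp x v hxv
    have := hp y v hyv
    have := hp₁ x hx
    have := hp₂ y hy
    tauto
  calc X.card = X₁.card + (X \ X₁).card := by rw [add_comm, card_sdiff_add_card_eq_card hX₁]
    _ ≤ _ := add_le_add h₁ h₂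
    _ = _ := (card_union_of_disjoint hdisj).symm
    _ = _ := by rw [← union_biUnion, union_sdiff_of_subset hX₁]

lemma IsMaxStableSetIn.exists_injOn_adj (hbip : G.Colorable 2) (hA : IsMaxStableSetIn G W A) :
    ∃ φ : V → V, Set.InjOn φ ↑(W \ A) ∧ ∀ c ∈ W \ A, φ c ∈ A ∧ G.Adj c (φ c) := by
  obtain ⟨col⟩ := hbip
  have hp : ∀ u v, G.Adj u v → (col u = 0 ↔ ¬ col v = 0) := fun u v huv => by
    have := col.valid huv
    omega
  obtain ⟨f, hf, hft⟩ := (all_card_le_biUnion_card_iff_exists_injective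
    fun c : ↥(W \ A) => A.filter (G.Adj c)).mp fun s => by
      have := hA.card_le_card_biUnion_of_bipartition hp (X := s.image Subtype.val)
        (fun v hv => by obtain ⟨c, -, rfl⟩ := mem_image.mp hv; exact c.2)
      rwa [image_biUnion, card_image_of_injective _ Subtype.val_injective] at this
  refine ⟨fun v => if h : v ∈ W \ A then f ⟨v, h⟩ else v, fun c hc c' hc' h => ?_, fun c hc => ?_⟩
  · simp only [dif_pos (mem_coe.mp hc), dif_pos (mem_coe.mp hc')] at h
    exact congrArg Subtype.val (hf h)
  · simp only [dif_pos hc]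
    exact mem_filter.mp (hft ⟨c, hc⟩)

end Hall

end

section

variable {V : Type*} [Fintype V] {G : SimpleGraph V} {S : Finset V}

lemma IsLocalMaxStableSet.card_sdiff_le_card_of_isMaxMatchingOn (hbip : G.Colorable 2)
    (hS : IsLocalMaxStableSet G S) {M : Finset (Sym2 V)}
    (hM : IsMaxMatchingOn G (closedNbhd G S) M) : (closedNbhd G S \ S).card ≤ M.card := by
  obtain ⟨ψ, hψinj, hψ⟩ := hS.isMaxStableSetIn.exists_injOn_adj hbip
  have hψS : ∀ c ∈ closedNbhd G S \ S, ψ c ∉ closedNbhd G S \ S :=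
    fun c hc h => (mem_sdiff.mp h).2 (hψ c hc).1
  rw [← card_image_mk_of_forall_apply_notMem hψS]
  exact hM.2 _ ⟨isMatching_image_mk hψinj (fun c hc => (hψ c hc).2) hψS,
    forall_mem_of_mem_image_mk fun c hc => ⟨(mem_sdiff.mp hc).1, subset_union_left (hψ c hc).1⟩⟩

lemma IsMaxStableSet.exists_isMatching_avoiding_closedNbhd (hbip : G.Colorable 2)
    {A : Finset V} (hA : IsMaxStableSet G A) (hSA : S ⊆ A) :
    ∃ M' : Finset (Sym2 V), IsMatching G M' ∧ (∀ e ∈ M', ∀ v ∈ e, v ∉ closedNbhd G S) ∧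
      Aᶜ.card ≤ (closedNbhd G S \ S).card + M'.card := by
  set W := closedNbhd G S
  obtain ⟨φ, hφinj, hφ⟩ := hA.isMaxStableSetIn_univ.exists_injOn_adj hbip
  set D := Aᶜ \ (W \ S)
  have hDA : ∀ c ∈ D, c ∈ univ \ A := fun c hc => by simpa using (mem_sdiff.mp hc).1
  have hDW : ∀ c ∈ D, c ∉ W := fun c hc hcW =>
    (mem_sdiff.mp hc).2 (mem_sdiff.mpr ⟨hcW, fun hcS => (mem_sdiff.mp (hDA c hc)).2 (hSA hcS)⟩)
  -- A neighbour of `c ∉ N[S]` in `A` lies neither in `S` nor, `A` being stable, in `N(S)`.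
  have hφW : ∀ c ∈ D, φ c ∉ W := fun c hc hφc => by
    obtain ⟨hφA, hcφ⟩ := hφ c (hDA c hc)
    rcases mem_closedNbhd.mp hφc with hφS | ⟨u, huS, huφ⟩
    · exact hDW c hc (mem_closedNbhd.mpr (Or.inr ⟨φ c, hφS, hcφ.symm⟩))
    · exact hA.1 u (hSA huS) (φ c) hφA huφ
  have hφD : ∀ c ∈ D, φ c ∉ D := fun c hc h => (mem_sdiff.mp (hDA _ h)).2 (hφ c (hDA c hc)).1
  refine ⟨D.image fun c => s(c, φ c),
    isMatching_image_mk (hφinj.mono hDA) (fun c hc => (hφ c (hDA c hc)).2) hφD,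
    forall_mem_of_mem_image_mk fun c hc => ⟨hDW c hc, hφW c hc⟩, ?_⟩
  rw [card_image_mk_of_forall_apply_notMem hφD]
  have : _ ≤ D.card := le_card_sdiff (W \ S) Aᶜ
  omega

end

/-- if `G` is bipartite, `S` is a local maximum stable set of `G`, and `M` is
a maximum matching of the subgraph of `G` induced by `N[S]`, then `M` extends to a maximum
matching of `G`. -/
theorem maxMatching_extends_to_maxMatching_of_bipartite {V : Type*} [Fintype V]
    (G : SimpleGraph V) (hbip : G.Colorable 2) (S : Finset V)
    (hS : IsLocalMaxStableSet G S)
    (M : Finset (Sym2 V)) (hM : IsMaxMatchingOn G (closedNbhd G S) M) :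
    ∃ M₀ : Finset (Sym2 V), IsMaxMatching G M₀ ∧ M ⊆ M₀ := by
  obtain ⟨A, hSA, hA⟩ := hS.exists_isMaxStableSet_superset
  obtain ⟨M', hM', hM'W, hcard⟩ := hA.exists_isMatching_avoiding_closedNbhd hbip hSA
  have hMW := hS.card_sdiff_le_card_of_isMaxMatchingOn hbip hM
  refine ⟨M ∪ M', ⟨hM.1.1.union hM' hM.1.2 hM'W, fun N hN => ?_⟩, subset_union_left⟩
  calc N.card ≤ Aᶜ.card := hN.card_le_card_compl hA.1
    _ ≤ M.card + M'.card := by omega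
    _ = (M ∪ M').card :=
      (card_union_of_disjoint (disjoint_of_forall_mem_of_forall_notMem hM.1.2 hM'W)).symm
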